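/- Let N ≥ 2. Inside the Laurent polynomial ring k[t_0^{±1}, …, t_{N-1}^{±1}], set y_m = t_m/t_1^m for 0 ≤ m ≤ N-1 and y_N = t_0/t_1^N, and let B be the subalgebra generated by y_0^{±1}, y_2^{±1}, …, y_N^{±1}. Then k[t_0^{±1}, …, t_{N-1}^{±1}] ≅ B[t_1]/(t_1^N − y_0/y_N); in particular k[t_0^{±1}, …, t_{N-1}^{±1}] is integral over B. -/

import Mathlib

/-!
Grade the Laurent monomials by `ZMod N`, giving `t_i` weight `i`. Every `y_m` has weight `0`, so
`B` lies in degree `0` while `t_1^j` has degree `j`. Distinct Laurent monomials are linearly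
independent, hence so are the graded pieces, and `1, t_1, …, t_1^{N-1}` are linearly independent
over `B`. Therefore `B[X]/(X^N - y_0/y_N) → k[t^{±1}]`, `X ↦ t_1`, is injective; it is onto since
`t_i = y_i t_1^i` and `t_1⁻¹ = (y_N/y_0) t_1^{N-1}`. Integrality holds because `t_1` is a root of
the monic `X^N - y_0/y_N`.
-/

set_option synthInstance.maxHeartbeats 800000
set_option maxHeartbeats 1600000
variable (k : Type*) [Field k]

/-- The image of the indeterminate `t_i` in `Frac k[t_0, …, t_{N-1}]`
(which contains the Laurent polynomial ring `k[t_0^{±1}, …, t_{N-1}^{±1}]`). -/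
noncomputable def t (N : ℕ) (i : Fin N) : FractionRing (MvPolynomial (Fin N) k) :=
  algebraMap (MvPolynomial (Fin N) k) (FractionRing (MvPolynomial (Fin N) k))
    (MvPolynomial.X i)

/-- The element `y_m = t_m / t_1^m` for `0 ≤ m ≤ N - 1`, and `y_N = t_0 / t_1^N`
(uniformly, `y_m = t_{m % N} / t_1^m`). -/
noncomputable def y (N : ℕ) (hN : 2 ≤ N) (m : ℕ) :
    FractionRing (MvPolynomial (Fin N) k) :=
  t k N ⟨m % N, Nat.mod_lt _ (by omega)⟩ / t k N ⟨1, by omega⟩ ^ m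

/-- The Laurent polynomial ring `k[t_0^{±1}, …, t_{N-1}^{±1}]`, realized as the
subalgebra generated by the `t_i` and their inverses. -/
noncomputable def laurentT (N : ℕ) : Subalgebra k (FractionRing (MvPolynomial (Fin N) k)) :=
  Algebra.adjoin k ({z | ∃ i : Fin N, z = t k N i} ∪ {z | ∃ i : Fin N, z = (t k N i)⁻¹})

/-- The subalgebra `B` generated by `y_0^{±1}, y_2^{±1}, …, y_N^{±1}`. -/
noncomputable def Bsub (N : ℕ) (hN : 2 ≤ N) :
    Subalgebra k (FractionRing (MvPolynomial (Fin N) k)) :=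
  Algebra.adjoin k
    {z | ∃ m : ℕ, (m = 0 ∨ (2 ≤ m ∧ m ≤ N)) ∧ (z = y k N hN m ∨ z = (y k N hN m)⁻¹)}


noncomputable instance instFieldF (N : ℕ) : Field (FractionRing (MvPolynomial (Fin N) k)) :=
  inferInstance

noncomputable instance instCommRingB (N : ℕ) (hN : 2 ≤ N) : CommRing (Bsub k N hN) :=
  inferInstance

noncomputable instance instCommRingPolyB (N : ℕ) (hN : 2 ≤ N) :
    CommRing (Polynomial (Bsub k N hN)) :=
  inferInstance

theorem LinearIndependent.iSupIndep_span_image_fiber {ι κ R M : Type*} [Ring R]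
    [AddCommGroup M] [Module R M] {v : ι → M} (hv : LinearIndependent R v) (f : ι → κ) :
    iSupIndep fun c => Submodule.span R (v '' (f ⁻¹' {c})) := by
  refine iSupIndep_def.2 fun c => (hv.disjoint_span_image (t := {i | f i ≠ c}) ?_).mono_right ?_
  · exact Set.disjoint_left.2 fun i hi hi' => hi' hi
  · exact iSup₂_le fun j hj => Submodule.span_mono <| Set.image_mono fun i hi => by
      simp_all

theorem iSupIndep.linearIndependent_of_homogeneous {ι κ R A : Type*} [AddMonoid ι]
    [CommRing R] [CommRing A] [NoZeroDivisors A] [Algebra R A] {𝒜 : ι → Submodule R A}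
    [SetLike.GradedMul 𝒜] (h𝒜 : iSupIndep 𝒜) {B : Subalgebra R A} (hB : ∀ b ∈ B, b ∈ 𝒜 0)
    {v : κ → A} {deg : κ → ι} (hdeg : Function.Injective deg) (hv : ∀ j, v j ∈ 𝒜 (deg j))
    (hv₀ : ∀ j, v j ≠ 0) : LinearIndependent B v := by
  refine linearIndependent_iff'.2 fun s g hsum j hj => ?_
  have hmem : ∀ i ∈ s, g i • v i ∈ 𝒜 (deg i) := fun i _ => by
    simpa [Subalgebra.smul_def] using SetLike.GradedMul.mul_mem (hB _ (g i).2) (hv i)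
  have := (iSupIndep_iff_finsetSum_eq_zero_imp_eq_zero _).1 (h𝒜.comp hdeg) s _ hmem hsum j hj
  simpa [Subalgebra.smul_def, hv₀ j] using this

open Polynomial

namespace AdjoinRoot

variable {R S : Type*} [CommRing R] [CommRing S] [Algebra R S] {f : R[X]} {x : S}

theorem range_liftAlgHom (hx : aeval x f = 0) :
    (liftAlgHom f (Algebra.ofId R S) x hx).range = Algebra.adjoin R {x} := by
  refine le_antisymm ?_ (Algebra.adjoin_le ?_)
  · rintro _ ⟨z, rfl⟩
    induction z using AdjoinRoot.induction_on with
    | ih p => exact Algebra.adjoin_singleton_eq_range_aeval R x ▸ ⟨p, rfl⟩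
  · exact Set.singleton_subset_iff.2 ⟨root f, liftAlgHom_root _ _ _ _⟩

theorem liftAlgHom_injective_of_linearIndependent (hf : f.Monic) (hx : aeval x f = 0)
    (hind : LinearIndependent R fun j : Fin f.natDegree => x ^ (j : ℕ)) :
    Function.Injective (liftAlgHom f (Algebra.ofId R S) x hx) := by
  let pb := powerBasis' hf
  have : (liftAlgHom f (Algebra.ofId R S) x hx).toLinearMap =
      pb.basis.constr R fun j => x ^ (j : ℕ) :=
    pb.basis.ext fun j => by
      rw [pb.basis.constr_basis, pb.basis_eq_pow, AlgHom.toLinearMap_apply, map_pow]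
      exact congrArg (· ^ (j : ℕ)) (liftAlgHom_root _ _ _ _)
  rw [← AlgHom.coe_toLinearMap, this]
  exact pb.basis.injective_constr_of_linearIndependent hind

end AdjoinRoot

section LaurentMonomial

variable (N : ℕ)

theorem t_ne_zero (i : Fin N) : t k N i ≠ 0 :=
  (map_ne_zero_iff _ (IsFractionRing.injective _ _)).2 (MvPolynomial.X_ne_zero i)

noncomputable def laurentMonomial (v : Fin N → ℤ) : FractionRing (MvPolynomial (Fin N) k) :=
  ∏ i, t k N i ^ v i

theorem laurentMonomial_zero : laurentMonomial k N 0 = 1 := by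
  simp [laurentMonomial]

theorem laurentMonomial_add (v w : Fin N → ℤ) :
    laurentMonomial k N (v + w) = laurentMonomial k N v * laurentMonomial k N w := by
  simp only [laurentMonomial, Pi.add_apply, zpow_add₀ (t_ne_zero k N _), Finset.prod_mul_distrib]

theorem laurentMonomial_ne_zero (v : Fin N → ℤ) : laurentMonomial k N v ≠ 0 :=
  Finset.prod_ne_zero_iff.2 fun i _ => zpow_ne_zero _ (t_ne_zero k N i)

theorem laurentMonomial_neg (v : Fin N → ℤ) :
    laurentMonomial k N (-v) = (laurentMonomial k N v)⁻¹ := by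
  simp [laurentMonomial, zpow_neg, Finset.prod_inv_distrib]

theorem laurentMonomial_single (i : Fin N) (n : ℤ) :
    laurentMonomial k N (Pi.single i n) = t k N i ^ n := by
  rw [laurentMonomial, Finset.prod_eq_single i (fun j _ hj => by simp [hj]) (by simp)]
  simp

theorem laurentMonomial_natCast (m : Fin N →₀ ℕ) :
    laurentMonomial k N (fun i => (m i : ℤ)) =
      algebraMap (MvPolynomial (Fin N) k) _ (MvPolynomial.monomial m 1) := by
  simp [laurentMonomial, MvPolynomial.monomial_eq, Finsupp.prod_fintype, t]

theorem linearIndependent_laurentMonomial : LinearIndependent k (laurentMonomial k N) := by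
  classical
  refine linearIndependent_iff_finset_linearIndependent.2 fun s => ?_
  -- shift the finitely many exponent vectors into `ℕ^N` by a common `d`
  let d : Fin N → ℤ := fun j => ∑ v ∈ s, |v j|
  have hd : ∀ v ∈ s, ∀ j, 0 ≤ v j + d j := fun v hv j => by
    have := Finset.single_le_sum (f := fun v : Fin N → ℤ => |v j|) (fun _ _ => abs_nonneg _) hv
    have := neg_abs_le (v j)
    linarith
  let e : s → Fin N →₀ ℕ := fun v => Finsupp.equivFunOnFinite.symm fun j => (v.1 j + d j).toNat
  have he : ∀ v : s, (fun j => (e v j : ℤ)) = v.1 + d := fun v =>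
    funext fun j => Int.toNat_of_nonneg (hd v v.2 j)
  have he_inj : Function.Injective e := fun v w hvw =>
    Subtype.ext <| add_right_cancel (b := d) <| by rw [← he, ← he, hvw]
  let φ := (IsScalarTower.toAlgHom k (MvPolynomial (Fin N) k)
    (FractionRing (MvPolynomial (Fin N) k))).toLinearMap
  have hφ : LinearMap.ker φ = ⊥ := LinearMap.ker_eq_bot.2 (IsFractionRing.injective _ _)
  let μ := LinearMap.mulLeft k (laurentMonomial k N (-d))
  have hμ : LinearMap.ker μ = ⊥ :=
    LinearMap.ker_eq_bot.2 (mul_right_injective₀ (laurentMonomial_ne_zero k N _))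
  have hfam : laurentMonomial k N ∘ Subtype.val =
      μ ∘ (φ ∘ MvPolynomial.basisMonomials (Fin N) k) ∘ e := funext fun v => by
    simp only [Function.comp_apply, MvPolynomial.coe_basisMonomials, μ, φ,
      LinearMap.mulLeft_apply, AlgHom.toLinearMap_apply, IsScalarTower.coe_toAlgHom',
      ← laurentMonomial_natCast, he, ← laurentMonomial_add]
    rw [add_comm (v : Fin N → ℤ) d, neg_add_cancel_left]
  rw [hfam]
  exact (((MvPolynomial.basisMonomials _ k).linearIndependent.map' φ hφ).comp e he_inj).map' μ hμ

end LaurentMonomial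

section LaurentGrading

open Pointwise

variable (N : ℕ) {M : Type*} [AddMonoid M] (w : (Fin N → ℤ) →+ M)

noncomputable def laurentGrading (c : M) : Submodule k (FractionRing (MvPolynomial (Fin N) k)) :=
  Submodule.span k (laurentMonomial k N '' (w ⁻¹' {c}))

theorem laurentMonomial_mem_laurentGrading (v : Fin N → ℤ) :
    laurentMonomial k N v ∈ laurentGrading k N w (w v) :=
  Submodule.subset_span ⟨v, rfl, rfl⟩

instance : SetLike.GradedMonoid (laurentGrading k N w) where
  one_mem := by
    simpa [laurentMonomial_zero] using laurentMonomial_mem_laurentGrading k N w 0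
  mul_mem c c' x x' hx hx' := by
    have := Submodule.mul_mem_mul hx hx'
    rw [laurentGrading, laurentGrading, Submodule.span_mul_span] at this
    refine Submodule.span_mono ?_ this
    rintro _ ⟨_, ⟨v, hv, rfl⟩, _, ⟨v', hv', rfl⟩, rfl⟩
    exact ⟨v + v', by simp_all, laurentMonomial_add k N v v'⟩

theorem iSupIndep_laurentGrading : iSupIndep (laurentGrading k N w) :=
  (linearIndependent_laurentMonomial k N).iSupIndep_span_image_fiber w

end LaurentGrading

noncomputable def indexWeight (N : ℕ) : (Fin N → ℤ) →+ ZMod N where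
  toFun v := ∑ i : Fin N, ((i : ℕ) : ZMod N) * (v i : ZMod N)
  map_zero' := by simp
  map_add' v w := by simp [mul_add, Finset.sum_add_distrib]

theorem indexWeight_single (N : ℕ) (i : Fin N) (n : ℤ) :
    indexWeight N (Pi.single i n) = (i : ℕ) * n := by
  simp [indexWeight, Pi.single_apply]

theorem t_mem_laurentT (N : ℕ) (i : Fin N) : t k N i ∈ laurentT k N :=
  Algebra.subset_adjoin (Set.mem_union_left _ ⟨i, rfl⟩)

theorem t_inv_mem_laurentT (N : ℕ) (i : Fin N) : (t k N i)⁻¹ ∈ laurentT k N :=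
  Algebra.subset_adjoin (Set.mem_union_right _ ⟨i, rfl⟩)

section Generators

variable (N : ℕ) (hN : 2 ≤ N)

noncomputable def t₁ : FractionRing (MvPolynomial (Fin N) k) := t k N ⟨1, by omega⟩

def yExponent (m : ℕ) : Fin N → ℤ :=
  Pi.single ⟨m % N, Nat.mod_lt _ (by omega)⟩ 1 + Pi.single ⟨1, by omega⟩ (-(m : ℤ))

theorem t₁_ne_zero : t₁ k N hN ≠ 0 := t_ne_zero k N _

theorem y_eq_laurentMonomial (m : ℕ) : y k N hN m = laurentMonomial k N (yExponent N hN m) := by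
  rw [yExponent, laurentMonomial_add, laurentMonomial_single, laurentMonomial_single, y, zpow_one,
    zpow_neg, zpow_natCast, div_eq_mul_inv]

theorem indexWeight_yExponent (m : ℕ) : indexWeight N (yExponent N hN m) = 0 := by
  simp [yExponent, indexWeight_single, ZMod.natCast_mod]

theorem Bsub_le_laurentGrading_zero :
    ∀ x ∈ Bsub k N hN, x ∈ laurentGrading k N (indexWeight N) 0 := by
  have hy : ∀ m, y k N hN m ∈ laurentGrading k N (indexWeight N) 0 ∧
      (y k N hN m)⁻¹ ∈ laurentGrading k N (indexWeight N) 0 := fun m => by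
    have hu := indexWeight_yExponent N hN m
    constructor
    · have := laurentMonomial_mem_laurentGrading k N (indexWeight N) (yExponent N hN m)
      rwa [hu, ← y_eq_laurentMonomial] at this
    · have := laurentMonomial_mem_laurentGrading k N (indexWeight N) (-yExponent N hN m)
      rwa [map_neg, hu, neg_zero, laurentMonomial_neg, ← y_eq_laurentMonomial] at this
  intro x hx
  refine Algebra.adjoin_le (S := SetLike.GradeZero.subalgebra (laurentGrading k N (indexWeight N)))
    ?_ hx
  rintro z ⟨m, -, rfl | rfl⟩
  exacts [(hy m).1, (hy m).2]

theorem t₁_pow_mem_laurentGrading (j : ℕ) :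
    t₁ k N hN ^ j ∈ laurentGrading k N (indexWeight N) (j : ZMod N) := by
  have := laurentMonomial_mem_laurentGrading k N (indexWeight N) (Pi.single ⟨1, by omega⟩ j)
  rwa [laurentMonomial_single, zpow_natCast, indexWeight_single, Nat.cast_one, one_mul,
    Int.cast_natCast] at this

theorem linearIndependent_t₁_pow {n : ℕ} (hn : n ≤ N) :
    LinearIndependent (Bsub k N hN) fun j : Fin n => t₁ k N hN ^ (j : ℕ) := by
  have hdeg : Function.Injective fun j : Fin n => ((j : ℕ) : ZMod N) := fun i j hij => by
    have := (ZMod.natCast_eq_natCast_iff' _ _ N).1 hij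
    rwa [Nat.mod_eq_of_lt (by omega), Nat.mod_eq_of_lt (by omega), Fin.val_inj] at this
  exact (iSupIndep_laurentGrading k N (indexWeight N)).linearIndependent_of_homogeneous
    (Bsub_le_laurentGrading_zero k N hN) hdeg (fun j => t₁_pow_mem_laurentGrading k N hN j)
    (fun j => pow_ne_zero _ (t₁_ne_zero k N hN))

theorem y_mem_Bsub {m : ℕ} (hm : m = 0 ∨ 2 ≤ m ∧ m ≤ N) : y k N hN m ∈ Bsub k N hN :=
  Algebra.subset_adjoin ⟨m, hm, Or.inl rfl⟩

theorem y_inv_mem_Bsub {m : ℕ} (hm : m = 0 ∨ 2 ≤ m ∧ m ≤ N) : (y k N hN m)⁻¹ ∈ Bsub k N hN :=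
  Algebra.subset_adjoin ⟨m, hm, Or.inr rfl⟩

noncomputable def yRatio : Bsub k N hN :=
  ⟨y k N hN 0 * (y k N hN N)⁻¹,
    mul_mem (y_mem_Bsub k N hN (Or.inl rfl)) (y_inv_mem_Bsub k N hN (Or.inr ⟨hN, le_rfl⟩))⟩

theorem coe_yRatio : (yRatio k N hN : FractionRing (MvPolynomial (Fin N) k)) =
    y k N hN 0 / y k N hN N :=
  (div_eq_mul_inv _ _).symm

theorem coe_yRatio_eq_t₁_pow :
    (yRatio k N hN : FractionRing (MvPolynomial (Fin N) k)) = t₁ k N hN ^ N := by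
  have h0 := t_ne_zero k N ⟨0 % N, Nat.mod_lt _ (by omega)⟩
  have hN' : (⟨N % N, Nat.mod_lt _ (by omega)⟩ : Fin N) = ⟨0 % N, Nat.mod_lt _ (by omega)⟩ := by
    simp
  rw [coe_yRatio, y, y, hN', t₁]
  field_simp

theorem t_eq_y_mul_t₁_pow (i : Fin N) : t k N i = y k N hN i * t₁ k N hN ^ (i : ℕ) := by
  rw [y, t₁, div_mul_cancel₀ _ (pow_ne_zero _ (t_ne_zero k N _))]
  exact congrArg _ (Fin.ext (Nat.mod_eq_of_lt i.2).symm)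

theorem t₁_inv_eq : (t₁ k N hN)⁻¹ =
    ((yRatio k N hN : FractionRing (MvPolynomial (Fin N) k)))⁻¹ * t₁ k N hN ^ (N - 1) := by
  rw [coe_yRatio_eq_t₁_pow, ← pow_sub_one_mul (by omega), mul_inv, mul_comm,
    mul_inv_cancel_left₀ (pow_ne_zero _ (t₁_ne_zero k N hN))]

theorem laurentT_le {A : Subalgebra k (FractionRing (MvPolynomial (Fin N) k))}
    (hB : ∀ b ∈ Bsub k N hN, b ∈ A) (ht₁ : t₁ k N hN ∈ A) : laurentT k N ≤ A := by
  have ht₁_inv : (t₁ k N hN)⁻¹ ∈ A := by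
    rw [t₁_inv_eq, coe_yRatio, inv_div, div_eq_mul_inv]
    exact mul_mem (hB _ (mul_mem (y_mem_Bsub k N hN (Or.inr ⟨hN, le_rfl⟩))
      (y_inv_mem_Bsub k N hN (Or.inl rfl)))) (pow_mem ht₁ _)
  refine Algebra.adjoin_le ?_
  rintro _ (⟨i, rfl⟩ | ⟨i, rfl⟩) <;> by_cases hi : (i : ℕ) = 1
  · obtain rfl : i = ⟨1, hN⟩ := Fin.ext hi
    exact ht₁
  · rw [t_eq_y_mul_t₁_pow k N hN i]
    exact mul_mem (hB _ (y_mem_Bsub k N hN (by omega))) (pow_mem ht₁ _)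
  · obtain rfl : i = ⟨1, hN⟩ := Fin.ext hi
    exact ht₁_inv
  · rw [t_eq_y_mul_t₁_pow k N hN i, mul_inv, ← inv_pow]
    exact mul_mem (hB _ (y_inv_mem_Bsub k N hN (by omega))) (pow_mem ht₁_inv _)

theorem laurentT_eq_adjoin_t₁ :
    laurentT k N = (Algebra.adjoin (Bsub k N hN) {t₁ k N hN}).restrictScalars k := by
  refine Eq.trans (le_antisymm ?_ (Algebra.adjoin_le (Set.union_subset ?_ ?_)))
    (Algebra.adjoin_union_eq_adjoin_adjoin k _ _)
  · exact laurentT_le k N hN (fun b hb => Algebra.adjoin_mono Set.subset_union_left hb)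
      (Algebra.subset_adjoin (Set.mem_union_right _ rfl))
  · rintro _ ⟨m, -, rfl | rfl⟩ <;> rw [y]
    · rw [div_eq_mul_inv, ← inv_pow]
      exact mul_mem (t_mem_laurentT k N _) (pow_mem (t_inv_mem_laurentT k N _) _)
    · rw [inv_div, div_eq_mul_inv]
      exact mul_mem (pow_mem (t_mem_laurentT k N _) _) (t_inv_mem_laurentT k N _)
  · exact Set.singleton_subset_iff.2 (t_mem_laurentT k N _)

end Generators

/-- `k[t_0^{±1}, …, t_{N-1}^{±1}] ≅ B[t_1]/(t_1^N − y_0/y_N)`; in particular the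
Laurent polynomial ring is integral over `B`. -/
theorem laurent_iso_and_integral (N : ℕ) (hN : 2 ≤ N) :
    ∃ b : Bsub k N hN,
      (b : FractionRing (MvPolynomial (Fin N) k)) = y k N hN 0 / y k N hN N ∧
      Nonempty (laurentT k N ≃ₐ[k]
        (Polynomial (Bsub k N hN) ⧸
          Ideal.span {Polynomial.X ^ N - Polynomial.C b})) ∧
      ∀ x ∈ laurentT k N, IsIntegral (Bsub k N hN) x := by
  have hmonic : (X ^ N - C (yRatio k N hN)).Monic := monic_X_pow_sub_C _ (by omega)
  have hroot : aeval (t₁ k N hN) (X ^ N - C (yRatio k N hN)) = 0 := by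
    simp [coe_yRatio_eq_t₁_pow]
  let ψ := AdjoinRoot.liftAlgHom _ (Algebra.ofId _ _) (t₁ k N hN) hroot
  have hψ : Function.Injective ψ :=
    AdjoinRoot.liftAlgHom_injective_of_linearIndependent hmonic hroot
      (linearIndependent_t₁_pow k N hN natDegree_X_pow_sub_C.le)
  have hrange : (ψ.restrictScalars k).range = laurentT k N := by
    rw [laurentT_eq_adjoin_t₁ k N hN, ← AdjoinRoot.range_liftAlgHom hroot]
    rfl
  refine ⟨yRatio k N hN, coe_yRatio k N hN,
    ⟨((AlgEquiv.ofInjective (ψ.restrictScalars k) hψ).trans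
      (Subalgebra.equivOfEq _ _ hrange)).symm⟩, fun x hx => ?_⟩
  rw [laurentT_eq_adjoin_t₁ k N hN] at hx
  exact adjoin_le_integralClosure ⟨_, hmonic, hroot⟩ hx
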